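/- Let A, B, C be positive semidefinite n×n Hermitian matrices. Then (1/2)(rank(A+C) + rank(B+C)) ≤ rank(A+B+C) + rank(C) ≤ rank(A+C) + rank(B+C). -/

import Mathlib

/-!
For positive semidefinite matrices the kernel of a sum is the intersection of the kernels,
since `x⋆ (A + B) x = 0` forces `x⋆ A x = x⋆ B x = 0`. By rank–nullity, with `U`, `V`, `W` the
kernels of `A`, `B`, `C`, the right inequality becomes
`dim (U ⊓ W) + dim (V ⊓ W) ≤ dim (U ⊓ V ⊓ W) + dim W`, the modular law for the two subspaces
`U ⊓ W`, `V ⊓ W` of `W`. The left one only needs that adding a positive semidefinite matrix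
cannot decrease the rank.
-/

open Matrix
open LinearMap (ker)
open scoped ComplexOrder

theorem Submodule.finrank_add_finrank_le_finrank_inf_add_finrank
    {K V : Type*} [DivisionRing K] [AddCommGroup V] [Module K V]
    {S T W : Submodule K V} [FiniteDimensional K W] (hS : S ≤ W) (hT : T ≤ W) :
    Module.finrank K S + Module.finrank K T ≤
      Module.finrank K ↥(S ⊓ T) + Module.finrank K W := by
  have : FiniteDimensional K S := Submodule.finiteDimensional_of_le hS
  have : FiniteDimensional K T := Submodule.finiteDimensional_of_le hT
  rw [← Submodule.finrank_sup_add_finrank_inf_eq, add_comm]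
  gcongr
  exact Submodule.finrank_mono (sup_le hS hT)

namespace Matrix

variable {n : Type*} [Fintype n]

theorem rank_add_finrank_ker {K : Type*} [Field K] (M : Matrix n n K) :
    M.rank + Module.finrank K (ker M.mulVecLin) = Fintype.card n := by
  rw [rank, LinearMap.finrank_range_add_finrank_ker, Module.finrank_fintype_fun_eq_card]

namespace PosSemidef

variable {𝕜 : Type*} [RCLike 𝕜] {A B C : Matrix n n 𝕜}

theorem ker_add (hA : A.PosSemidef) (hB : B.PosSemidef) :
    ker (A + B).mulVecLin = ker A.mulVecLin ⊓ ker B.mulVecLin := by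
  ext x
  simp only [LinearMap.mem_ker, Submodule.mem_inf, mulVecLin_apply, add_mulVec]
  refine ⟨fun h ↦ ?_, fun ⟨hAx, hBx⟩ ↦ by rw [hAx, hBx, add_zero]⟩
  have hsum : star x ⬝ᵥ A *ᵥ x + star x ⬝ᵥ B *ᵥ x = 0 := by
    rw [← dotProduct_add, h, dotProduct_zero]
  obtain ⟨hAx, hBx⟩ := (add_eq_zero_iff_of_nonneg (hA.dotProduct_mulVec_nonneg x)
    (hB.dotProduct_mulVec_nonneg x)).mp hsum
  exact ⟨(hA.dotProduct_mulVec_zero_iff x).mp hAx, (hB.dotProduct_mulVec_zero_iff x).mp hBx⟩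

theorem rank_le_rank_add (hA : A.PosSemidef) (hB : B.PosSemidef) : A.rank ≤ (A + B).rank := by
  have hker : Module.finrank 𝕜 (ker (A + B).mulVecLin) ≤
      Module.finrank 𝕜 (ker A.mulVecLin) :=
    Submodule.finrank_mono (hA.ker_add hB ▸ inf_le_left)
  have := A.rank_add_finrank_ker
  have := (A + B).rank_add_finrank_ker
  omega

theorem rank_add_add_add_rank_le (hA : A.PosSemidef) (hB : B.PosSemidef) (hC : C.PosSemidef) :
    (A + B + C).rank + C.rank ≤ (A + C).rank + (B + C).rank := by
  have hmodular := Submodule.finrank_add_finrank_le_finrank_inf_add_finrank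
    (inf_le_right : ker A.mulVecLin ⊓ ker C.mulVecLin ≤ ker C.mulVecLin)
    (inf_le_right : ker B.mulVecLin ⊓ ker C.mulVecLin ≤ ker C.mulVecLin)
  rw [← inf_inf_distrib_right, ← hA.ker_add hB, ← (hA.add hB).ker_add hC, ← hA.ker_add hC,
    ← hB.ker_add hC] at hmodular
  have := (A + B + C).rank_add_finrank_ker
  have := (A + C).rank_add_finrank_ker
  have := (B + C).rank_add_finrank_ker
  have := C.rank_add_finrank_ker
  omega

end PosSemidef

end Matrix

/-- For positive semidefinite Hermitian matrices `A`, `B`, `C`: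
`(1/2)(rank (A+C) + rank (B+C)) ≤ rank (A+B+C) + rank C ≤ rank (A+C) + rank (B+C)`. -/
theorem psd_rank_two_sided_estimate
    (n : ℕ) (A B C : Matrix (Fin n) (Fin n) ℂ)
    (hA : A.PosSemidef) (hB : B.PosSemidef) (hC : C.PosSemidef) :
    ((A + C).rank + (B + C).rank : ℚ) / 2 ≤ ((A + B + C).rank + C.rank : ℚ) ∧
    (A + B + C).rank + C.rank ≤ (A + C).rank + (B + C).rank := by
  refine ⟨?_, hA.rank_add_add_add_rank_le hB hC⟩
  have hAC : ((A + C).rank : ℚ) ≤ (A + B + C).rank := by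
    rw [add_right_comm]
    exact_mod_cast (hA.add hC).rank_le_rank_add hB
  have hBC : ((B + C).rank : ℚ) ≤ (A + B + C).rank := by
    rw [show A + B + C = B + C + A by abel]
    exact_mod_cast (hB.add hC).rank_le_rank_add hA
  have hC0 : (0 : ℚ) ≤ C.rank := Nat.cast_nonneg _
  linarith
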